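/- arXiv:2301.05846 — 2 statements merged into one kernel-verified Lean document; each statement's English description precedes it below -/
import Mathlib

section
/- Let Γ₀ be a linearly ordered commutative group with zero such that every nonzero element of Γ₀ admits an n-th root for every integer n ≥ 1. Let K be a field, v : K → Γ₀ a valuation, L a finite field extension of K, f ∈ L, and γ ∈ Γ₀ with γ < 1. Assume that for every valuation w : L → Γ₀ whose restriction along the embedding K → L equals v, one has w(f − 1) ≤ γ. Then v(N_{L/K}(f) − 1) ≤ γ, where N_{L/K} : L → K denotes the field norm. (This is Lemma 5.3 of the paper, stated in multiplicative valuation notation: 'w(x) ≤ γ' here corresponds to the additive inequality 'w(x) ≥ γ' in the paper, and the divisibility hypothesis on Γ₀ plays the role of working in Γ ⊗ ℚ.) -/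
/-!
Extend `v` to a valuation `u : AlgebraicClosure L → Γ₀`. Chevalley's theorem gives a valuation
ring upstairs dominating that of `v`; its value group is torsion over the value group of `v`, so
taking roots in the divisible group `Γ₀` transports it to a `Γ₀`-valued extension. Composing `u`
with the `K`-embeddings `τ` of `L` gives extensions of `v` to `L`, so every conjugate `τ f`
satisfies `u (τ f - 1) ≤ γ`. Since `γ ≤ 1` these elements form a monoid, and `N(f)` is a power of
the product of the conjugates of `f`.
-/

open Polynomial

theorem pow_sub_eq_div_of_mul_pow_eq {G₀ : Type*} [CommGroupWithZero G₀] {a b c : G₀} {m n : ℕ}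
    (hb : b ≠ 0) (hc : c ≠ 0) (hmn : m ≤ n) (h : a * c ^ m = b * c ^ n) :
    c ^ (n - m) = a / b := by
  rw [pow_sub₀ c hc hmn, eq_div_iff hb, mul_right_comm, mul_comm _ b, ← h,
    mul_inv_cancel_right₀ (pow_ne_zero _ hc)]

theorem ValuationSubring.exists_comap_eq {K F : Type*} [Field K] [Field F] (A : ValuationSubring K)
    (i : K →+* F) : ∃ B : ValuationSubring F, B.comap i = A := by
  obtain ⟨B, hAB, hloc⟩ := IsLocalRing.exists_factor_valuationRing (i.comp A.subtype)
  refine ⟨B, le_antisymm (fun k hk ↦ ?_) fun k hk ↦ hAB ⟨k, hk⟩⟩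
  obtain hkA | hkA := A.mem_or_inv_mem k
  · exact hkA
  obtain rfl | hk0 := eq_or_ne k 0
  · exact A.zero_mem
  -- `k⁻¹ ∈ A` becomes a unit in `B`, so it is a unit of `A` by locality
  have hunit : IsUnit ((i.comp A.subtype).codRestrict B.toSubring hAB ⟨k⁻¹, hkA⟩) :=
    isUnit_iff_exists_inv.2 ⟨⟨i k, hk⟩, Subtype.ext (by simp [map_inv₀, hk0])⟩
  obtain ⟨b, hb⟩ := (hloc.map_nonunit _ hunit).exists_right_inv
  have hkb : (b : K) = k := by
    simpa [hk0] using congrArg (k * ·) (congrArg Subtype.val hb)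
  exact hkb ▸ b.2

namespace Valuation

variable {R Γ₀ : Type*} [Ring R] [LinearOrderedCommGroupWithZero Γ₀]

theorem exists_ne_map_eq_of_sum_eq_zero (v : Valuation R Γ₀) {ι : Type*} {s : Finset ι}
    {g : ι → R} (hs : ∑ i ∈ s, g i = 0) {i₀ : ι} (hi₀ : i₀ ∈ s) (hg : v (g i₀) ≠ 0) :
    ∃ i ∈ s, ∃ j ∈ s, i ≠ j ∧ v (g i) = v (g j) ∧ v (g j) ≠ 0 := by
  classical
  obtain ⟨j, hj, hmax⟩ := s.exists_max_image (fun i ↦ v (g i)) ⟨i₀, hi₀⟩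
  have hj0 : v (g j) ≠ 0 := ((zero_lt_iff.2 hg).trans_le (hmax i₀ hi₀)).ne'
  by_contra! hne
  have hlt : ∀ i ∈ s.erase j, v (g i) < v (g j) := fun i hi ↦
    (hmax i (Finset.mem_of_mem_erase hi)).lt_of_ne
      fun h ↦ hj0 (hne i (Finset.mem_of_mem_erase hi) j hj (Finset.ne_of_mem_erase hi) h)
  have hrest : ∑ i ∈ s.erase j, g i = -g j := by
    rw [eq_neg_iff_add_eq_zero, Finset.sum_erase_add s g hj, hs]
  simpa [hrest] using v.map_sum_lt hj0 hlt

theorem map_mul_sub_one_le (v : Valuation R Γ₀) {γ : Γ₀} (hγ : γ ≤ 1) {a b : R}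
    (ha : v (a - 1) ≤ γ) (hb : v (b - 1) ≤ γ) : v (a * b - 1) ≤ γ := by
  have ha1 : v a ≤ 1 := by
    simpa using v.map_add_le (ha.trans hγ) v.map_one.le (x := a - 1) (y := 1)
  rw [show a * b - 1 = a * (b - 1) + (a - 1) by noncomm_ring]
  refine v.map_add_le ?_ ha
  calc v (a * (b - 1)) = v a * v (b - 1) := v.map_mul _ _
    _ ≤ 1 * γ := mul_le_mul' ha1 hb
    _ = γ := one_mul γ

def subOneLeSubmonoid (v : Valuation R Γ₀) {γ : Γ₀} (hγ : γ ≤ 1) : Submonoid R where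
  carrier := {x | v (x - 1) ≤ γ}
  one_mem' := by simp
  mul_mem' := v.map_mul_sub_one_le hγ

theorem mem_subOneLeSubmonoid (v : Valuation R Γ₀) {γ : Γ₀} (hγ : γ ≤ 1) {x : R} :
    x ∈ v.subOneLeSubmonoid hγ ↔ v (x - 1) ≤ γ :=
  Iff.rfl

section RootValue

variable {S Γ₁ : Type*} [Ring S] [LinearOrderedCommGroupWithZero Γ₁]
  {i : R →+* S} {v : Valuation R Γ₀} {w : Valuation S Γ₁}

/-- A `Γ₀`-valued valuation `u` with `u.comap i = v` which is equivalent to `w` is forced to take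
the value `δ` at `x`. -/
def IsRootValue (i : R →+* S) (v : Valuation R Γ₀) (w : Valuation S Γ₁) (x : S) (δ : Γ₀) :
    Prop :=
  ∃ n ≠ 0, ∃ k : R, w x ^ n = w (i k) ∧ δ ^ n = v k

theorem isRootValue_apply (k : R) : IsRootValue i v w (i k) (v k) :=
  ⟨1, one_ne_zero, k, pow_one _, pow_one _⟩

theorem exists_isRootValue (hroot : ∀ γ : Γ₀, γ ≠ 0 → ∀ n : ℕ, 1 ≤ n → ∃ δ : Γ₀, δ ^ n = γ)
    {x : S} (hx : ∃ n ≠ 0, ∃ k : R, w x ^ n = w (i k)) : ∃ δ, IsRootValue i v w x δ := by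
  obtain ⟨n, hn, k, hk⟩ := hx
  obtain hk0 | hk0 := eq_or_ne (v k) 0
  · exact ⟨0, n, hn, k, hk, by rw [hk0, zero_pow hn]⟩
  · obtain ⟨δ, hδ⟩ := hroot _ hk0 n (Nat.one_le_iff_ne_zero.2 hn)
    exact ⟨δ, n, hn, k, hk, hδ⟩

namespace IsRootValue

variable {x y : S} {δ ε : Γ₀}

theorem le_iff (hvw : (w.comap i).IsEquiv v) (hx : IsRootValue i v w x δ)
    (hy : IsRootValue i v w y ε) : w x ≤ w y ↔ δ ≤ ε := by
  obtain ⟨n, hn, k, hwx, hδ⟩ := hx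
  obtain ⟨m, hm, l, hwy, hε⟩ := hy
  have hnm : n * m ≠ 0 := mul_ne_zero hn hm
  calc w x ≤ w y ↔ w x ^ (n * m) ≤ w y ^ (n * m) := (pow_le_pow_iff_left₀ zero_le zero_le hnm).symm
    _ ↔ w (i (k ^ m)) ≤ w (i (l ^ n)) := by
      rw [pow_mul, mul_comm n m, pow_mul (w y), hwx, hwy, map_pow, map_pow, map_pow, map_pow]
    _ ↔ v (k ^ m) ≤ v (l ^ n) := hvw _ _
    _ ↔ δ ^ (n * m) ≤ ε ^ (n * m) := by
      rw [map_pow, map_pow, ← hδ, ← hε, ← pow_mul, ← pow_mul, mul_comm m n]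
    _ ↔ δ ≤ ε := pow_le_pow_iff_left₀ zero_le zero_le hnm

theorem unique (hvw : (w.comap i).IsEquiv v) (hδ : IsRootValue i v w x δ)
    (hε : IsRootValue i v w x ε) : δ = ε :=
  le_antisymm ((hδ.le_iff hvw hε).1 le_rfl) ((hε.le_iff hvw hδ).1 le_rfl)

theorem mul (hx : IsRootValue i v w x δ) (hy : IsRootValue i v w y ε) :
    IsRootValue i v w (x * y) (δ * ε) := by
  obtain ⟨n, hn, k, hwx, hδ⟩ := hx
  obtain ⟨m, hm, l, hwy, hε⟩ := hy
  refine ⟨n * m, mul_ne_zero hn hm, k ^ m * l ^ n, ?_, ?_⟩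
  · rw [map_mul, mul_pow, pow_mul, mul_comm n m, pow_mul (w y), hwx, hwy, map_mul, map_mul,
      map_pow, map_pow, map_pow, map_pow]
  · rw [mul_pow, pow_mul, mul_comm n m, pow_mul ε, hδ, hε, map_mul, map_pow, map_pow]

end IsRootValue

theorem exists_comap_eq_of_isEquiv
    (hroot : ∀ γ : Γ₀, γ ≠ 0 → ∀ n : ℕ, 1 ≤ n → ∃ δ : Γ₀, δ ^ n = γ)
    (hvw : (w.comap i).IsEquiv v) (hpow : ∀ x, ∃ n ≠ 0, ∃ k : R, w x ^ n = w (i k)) :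
    ∃ u : Valuation S Γ₀, u.comap i = v := by
  choose u hu using fun x ↦ exists_isRootValue (v := v) hroot (hpow x)
  have hu_eq {x : S} {δ : Γ₀} (h : IsRootValue i v w x δ) : u x = δ := (hu x).unique hvw h
  refine ⟨{ toFun := u
            map_zero' := hu_eq (by simpa using isRootValue_apply (i := i) (v := v) (w := w) 0)
            map_one' := hu_eq (by simpa using isRootValue_apply (i := i) (v := v) (w := w) 1)
            map_mul' := fun x y ↦ hu_eq ((hu x).mul (hu y))
            map_add_le_max' := fun x y ↦ ?_ }, ext fun k ↦ hu_eq (isRootValue_apply k)⟩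
  obtain h | h := le_max_iff.1 (w.map_add x y)
  · exact le_max_of_le_left (((hu _).le_iff hvw (hu x)).1 h)
  · exact le_max_of_le_right (((hu _).le_iff hvw (hu y)).1 h)

end RootValue

section Algebraic

variable {K F Γ₁ : Type*} [Field K] [Field F] [Algebra K F] [Algebra.IsAlgebraic K F]
  [LinearOrderedCommGroupWithZero Γ₁]

theorem exists_pow_eq_map_algebraMap (w : Valuation F Γ₁) (x : F) :
    ∃ n ≠ 0, ∃ k : K, w x ^ n = w (algebraMap K F k) := by
  obtain rfl | hx := eq_or_ne x 0
  · exact ⟨1, one_ne_zero, 0, by simp⟩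
  set p := minpoly K x
  have hsum : ∑ i ∈ Finset.range (p.natDegree + 1), algebraMap K F (p.coeff i) * x ^ i = 0 := by
    simpa [Algebra.smul_def, aeval_eq_sum_range] using minpoly.aeval K x
  have h0 : w (algebraMap K F (p.coeff 0) * x ^ 0) ≠ 0 := by
    simpa using minpoly.coeff_zero_ne_zero (Algebra.IsIntegral.isIntegral x) hx
  obtain ⟨i, -, j, -, hij, heq, hj⟩ := w.exists_ne_map_eq_of_sum_eq_zero hsum (by simp) h0
  wlog hlt : i < j generalizing i j
  · exact this j i hij.symm heq.symm (heq ▸ hj) (hij.lt_or_gt.resolve_left hlt)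
  simp only [map_mul, map_pow] at heq hj
  refine ⟨j - i, Nat.sub_ne_zero_of_lt hlt, p.coeff i / p.coeff j, ?_⟩
  rw [map_div₀, map_div₀]
  exact pow_sub_eq_div_of_mul_pow_eq (left_ne_zero_of_mul hj) (w.ne_zero_iff.2 hx) hlt.le heq

theorem exists_comap_eq_of_isAlgebraic
    (hroot : ∀ γ : Γ₀, γ ≠ 0 → ∀ n : ℕ, 1 ≤ n → ∃ δ : Γ₀, δ ^ n = γ) (v : Valuation K Γ₀) :
    ∃ u : Valuation F Γ₀, u.comap (algebraMap K F) = v := by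
  obtain ⟨B, hB⟩ := v.valuationSubring.exists_comap_eq (algebraMap K F)
  have hequiv : (B.valuation.comap (algebraMap K F)).IsEquiv v := isEquiv_iff_val_le_one.2 <| by
    intro k
    rw [comap_apply, B.valuation_le_one_iff, ← ValuationSubring.mem_comap, hB,
      mem_valuationSubring_iff]
  exact exists_comap_eq_of_isEquiv hroot hequiv (exists_pow_eq_map_algebraMap _)

end Algebraic

end Valuation

/-- **Lemma 5.3 of the paper (multiplicative notation).**
Let `Γ₀` be a linearly ordered commutative group with zero in which every nonzero element
has an `n`-th root for every `n ≥ 1`.  Let `v` be a `Γ₀`-valued valuation on a field `K`,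
let `L/K` be a finite field extension, `f ∈ L` and `γ < 1` in `Γ₀`.  If every valuation
`w` on `L` extending `v` satisfies `w(f - 1) ≤ γ`, then `v(N_{L/K}(f) - 1) ≤ γ`. -/
theorem valuation_norm_sub_one_le
    (Γ₀ : Type*) [LinearOrderedCommGroupWithZero Γ₀]
    (hroot : ∀ γ : Γ₀, γ ≠ 0 → ∀ n : ℕ, 1 ≤ n → ∃ δ : Γ₀, δ ^ n = γ)
    (K L : Type*) [Field K] [Field L] [Algebra K L] [FiniteDimensional K L]
    (v : Valuation K Γ₀) (f : L) (γ : Γ₀) (hγ : γ < 1)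
    (h : ∀ w : Valuation L Γ₀, w.comap (algebraMap K L) = v → w (f - 1) ≤ γ) :
    v (Algebra.norm K f - 1) ≤ γ := by
  let M := AlgebraicClosure L
  have : Algebra.IsAlgebraic K M := .trans K L M
  obtain ⟨u, hu⟩ := Valuation.exists_comap_eq_of_isAlgebraic hroot (F := M) v
  have hconj : ∀ r ∈ (minpoly K f).aroots M, r ∈ u.subOneLeSubmonoid hγ.le := by
    intro r hr
    obtain ⟨τ, rfl⟩ := IntermediateField.exists_algHom_of_splits_of_aeval
      (fun x ↦ ⟨Algebra.IsIntegral.isIntegral x, IsAlgClosed.splits _⟩) (mem_aroots.1 hr).2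
    have hτ : (u.comap (τ : L →+* M)).comap (algebraMap K L) = v := by
      rw [← Valuation.comap_comp, ← hu]
      congr 1
      exact τ.comp_algebraMap
    simpa [Valuation.mem_subOneLeSubmonoid] using h _ hτ
  have hnorm := Algebra.norm_eq_prod_roots (K := K) M (x := f) (IsAlgClosed.splits _)
  rw [← hu, Valuation.comap_apply, map_sub, map_one, hnorm]
  exact pow_mem (Submonoid.multiset_prod_mem _ _ hconj) _
end

section
/- Let A be a reduced commutative ring with only finitely many minimal primes that is integrally closed in its total ring of fractions Q(A) (the localization of A at the multiplicative set of non-zero-divisors). Then the canonical ring homomorphism A → ∏_{p minimal} A/p is an isomorphism; in particular, A is a finite product of integrally closed domains. (This is the affine form of the paper's assertion that any finitely reducible normal scheme is a finite disjoint union of normal integral schemes.) -/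
/-!
Fix a minimal prime `p`. Prime avoidance gives `a ∉ p` lying in every other minimal prime and
`b ∈ p` lying in no other one; then `a * b = 0` and `a + b` is a non-zero-divisor, so
`a / (a + b)` is an idempotent of `Q(A)`. Being integral over `A`, it is an element `c` of `A`
with `1 - c ∈ p` and `c` in every other minimal prime. Such elements make the minimal primes
pairwise comaximal, and the Chinese remainder theorem gives the isomorphism (injective because
`A` is reduced). Moreover `p = (1 - c)`, and the fraction field of `A ⧸ p` is `Q(A) ⧸ p Q(A)`,
which is `Q(A)` localized away from `c`; an element of it integral over `A ⧸ p` therefore lifts,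
after multiplication by a power of `c`, to an element of `Q(A)` integral over `A`, hence to an
element of `A`.
-/

open nonZeroDivisors Polynomial

section MinimalPrimes

variable {A : Type*} [CommRing A]

theorem not_le_of_mem_minimalPrimes {p q : Ideal A} (hp : p ∈ minimalPrimes A)
    (hq : q ∈ minimalPrimes A) (hne : q ≠ p) : ¬q ≤ p :=
  fun h ↦ hne (le_antisymm h (hp.2 hq.1 h))

theorem exists_notMem_forall_mem_of_ne (hfin : (minimalPrimes A).Finite) {p : Ideal A}
    (hp : p ∈ minimalPrimes A) : ∃ a ∉ p, ∀ q ∈ minimalPrimes A, q ≠ p → a ∈ q := by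
  classical
  set others := hfin.toFinset.erase p
  have hinf : ¬others.inf id ≤ p := by
    rw [hp.isPrime.inf_le']
    rintro ⟨q, hq, hqp⟩
    rw [Finset.mem_erase, Set.Finite.mem_toFinset] at hq
    exact not_le_of_mem_minimalPrimes hp hq.2 hq.1 hqp
  obtain ⟨a, ha, hap⟩ := SetLike.not_le_iff_exists.mp hinf
  refine ⟨a, hap, fun q hq hqp ↦ (Finset.inf_le (f := id) ?_ : others.inf id ≤ q) ha⟩
  simpa [others] using ⟨hqp, hq⟩

theorem exists_mem_forall_notMem_of_ne (hfin : (minimalPrimes A).Finite) {p : Ideal A}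
    (hp : p ∈ minimalPrimes A) : ∃ b ∈ p, ∀ q ∈ minimalPrimes A, q ≠ p → b ∉ q := by
  by_contra! h
  obtain ⟨q, ⟨hq, hqp⟩, hpq⟩ :=
    (Ideal.subset_union_prime_finite (hfin.subset (Set.sdiff_subset (t := {p}))) (f := id) p p
      (fun q hq _ _ ↦ hq.1.isPrime)).mp fun b hb ↦ by
        obtain ⟨q, hq, hqp, hbq⟩ := h b hb
        exact Set.mem_biUnion ⟨hq, hqp⟩ hbq
  exact not_le_of_mem_minimalPrimes hq hp (Ne.symm hqp) hpq

variable [IsReduced A]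

theorem eq_zero_of_forall_mem_minimalPrimes {x : A} (hx : ∀ p ∈ minimalPrimes A, x ∈ p) :
    x = 0 := by
  have : x ∈ (⊥ : Ideal A).radical := by
    rw [← Ideal.sInf_minimalPrimes]
    exact Submodule.mem_sInf.mpr hx
  exact IsNilpotent.eq_zero this

theorem mem_nonZeroDivisors_of_forall_notMem_minimalPrimes {x : A}
    (hx : ∀ p ∈ minimalPrimes A, x ∉ p) : x ∈ A⁰ :=
  mem_nonZeroDivisors_iff_right.mpr fun _ hyx ↦ eq_zero_of_forall_mem_minimalPrimes fun p hp ↦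
    (hp.isPrime.mem_or_mem (hyx ▸ p.zero_mem)).resolve_right (hx p hp)

end MinimalPrimes

theorem exists_mul_eq_of_mul_eq_zero_of_add_mem_nonZeroDivisors {A : Type*} [CommRing A]
    [IsIntegrallyClosed A] {a b : A} (hab : a * b = 0) (hs : a + b ∈ A⁰) :
    ∃ c, c * (a + b) = a := by
  set e := IsLocalization.mk' (FractionRing A) a ⟨a + b, hs⟩
  have he : e * e = e := by
    rw [← IsLocalization.mk'_mul, IsLocalization.mk'_eq_iff_eq]
    simp only [Submonoid.coe_mul]
    congr 1
    linear_combination (-(a + b)) * hab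
  have hint : IsIntegral A e := by
    refine ⟨X ^ 2 - X, monic_X_pow_sub (degree_X_le.trans_lt (by norm_num)), ?_⟩
    simp [sq, he]
  obtain ⟨c, hc⟩ := IsIntegrallyClosed.isIntegral_iff.mp hint
  refine ⟨c, IsFractionRing.injective A (FractionRing A) ?_⟩
  rw [map_mul, hc]
  exact IsLocalization.mk'_spec (FractionRing A) a ⟨a + b, hs⟩

section SeparatingElement

variable {A : Type*} [CommRing A] [IsReduced A] {p : Ideal A} {c : A}

theorem exists_one_sub_mem_forall_mem_of_ne [IsIntegrallyClosed A]
    (hfin : (minimalPrimes A).Finite) (hp : p ∈ minimalPrimes A) :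
    ∃ c, 1 - c ∈ p ∧ ∀ q ∈ minimalPrimes A, q ≠ p → c ∈ q := by
  obtain ⟨a, hap, haq⟩ := exists_notMem_forall_mem_of_ne hfin hp
  obtain ⟨b, hbp, hbq⟩ := exists_mem_forall_notMem_of_ne hfin hp
  have hab : a * b = 0 := eq_zero_of_forall_mem_minimalPrimes fun q hq ↦ by
    by_cases hqp : q = p
    · exact q.mul_mem_left a (hqp ▸ hbp)
    · exact q.mul_mem_right b (haq q hq hqp)
  have hs : ∀ q ∈ minimalPrimes A, a + b ∉ q := fun q hq hs ↦ by
    by_cases hqp : q = p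
    · subst hqp
      exact hap (by simpa using q.sub_mem hs hbp)
    · exact hbq q hq hqp (by simpa using q.sub_mem hs (haq q hq hqp))
  obtain ⟨c, hc⟩ := exists_mul_eq_of_mul_eq_zero_of_add_mem_nonZeroDivisors hab
    (mem_nonZeroDivisors_of_forall_notMem_minimalPrimes hs)
  refine ⟨c, ?_, fun q hq hqp ↦ ?_⟩
  · have : (1 - c) * (a + b) = b := by linear_combination -hc
    exact (hp.isPrime.mem_or_mem (by rwa [this])).resolve_right (hs p hp)
  · exact (hq.isPrime.mem_or_mem (by rw [hc]; exact haq q hq hqp)).resolve_right (hs q hq)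

theorem mul_eq_zero_of_mem_of_forall_mem (hc₂ : ∀ q ∈ minimalPrimes A, q ≠ p → c ∈ q)
    {x : A} (hx : x ∈ p) : x * c = 0 :=
  eq_zero_of_forall_mem_minimalPrimes fun q hq ↦ by
    by_cases hqp : q = p
    · exact q.mul_mem_right c (hqp ▸ hx)
    · exact q.mul_mem_left x (hc₂ q hq hqp)

theorem isIdempotentElem_of_one_sub_mem (hc₁ : 1 - c ∈ p)
    (hc₂ : ∀ q ∈ minimalPrimes A, q ≠ p → c ∈ q) : IsIdempotentElem c :=
  sub_eq_zero.mp (by linear_combination -mul_eq_zero_of_mem_of_forall_mem hc₂ hc₁)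

theorem eq_span_one_sub (hc₁ : 1 - c ∈ p) (hc₂ : ∀ q ∈ minimalPrimes A, q ≠ p → c ∈ q) :
    p = Ideal.span {1 - c} := by
  refine le_antisymm (fun x hx ↦ ?_) ((Ideal.span_singleton_le_iff_mem p).mpr hc₁)
  exact Ideal.mem_span_singleton'.mpr
    ⟨x, by linear_combination -mul_eq_zero_of_mem_of_forall_mem hc₂ hx⟩

theorem mul_add_one_sub_mem_nonZeroDivisors (hp : p ∈ minimalPrimes A) (hc₁ : 1 - c ∈ p)
    (hc₂ : ∀ q ∈ minimalPrimes A, q ≠ p → c ∈ q) {v : A} (hv : v ∉ p) :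
    c * v + (1 - c) ∈ A⁰ := by
  refine mem_nonZeroDivisors_of_forall_notMem_minimalPrimes fun q hq ht ↦ ?_
  by_cases hqp : q = p
  · subst hqp
    have hc : c ∉ q := fun h ↦ hq.isPrime.one_notMem (by simpa using q.add_mem hc₁ h)
    exact (hq.isPrime.mem_or_mem (by simpa using q.sub_mem ht hc₁)).elim hc hv
  · have hcq := hc₂ q hq hqp
    exact hq.isPrime.one_notMem
      (by simpa using q.add_mem (q.sub_mem ht (q.mul_mem_right v hcq)) hcq)

end SeparatingElement

section Quotient

variable {R S : Type*} [CommRing R] [CommRing S] [Algebra R S]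

theorem isFractionRing_quotient_map [IsFractionRing R S] (I : Ideal R)
    (h : R⁰.map (Ideal.Quotient.mk I) = (R ⧸ I)⁰) :
    IsFractionRing (R ⧸ I) (S ⧸ I.map (algebraMap R S)) := by
  have : IsLocalization (Algebra.algebraMapSubmonoid (R ⧸ I) R⁰) (S ⧸ I.map (algebraMap R S)) :=
    inferInstance
  rwa [Algebra.algebraMapSubmonoid, Ideal.Quotient.algebraMap_eq, h] at this

theorem exists_algebraMap_eq_of_isIntegral_quotient [IsIntegrallyClosedIn R S] {e : R}
    (he : IsIdempotentElem e) {I : Ideal R} (hI : I = Ideal.span {1 - e})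
    {x : S ⧸ I.map (algebraMap R S)} (hx : IsIntegral R x) :
    ∃ r : R, algebraMap R _ r = x := by
  have hker : RingHom.ker (algebraMap S (S ⧸ I.map (algebraMap R S))) =
      Ideal.span {1 - algebraMap R S e} := by
    rw [Ideal.Quotient.algebraMap_eq, Ideal.mk_ker, hI, Ideal.map_span, Set.image_singleton,
      map_sub, map_one]
  have := IsLocalization.away_of_isIdempotentElem (he.map (algebraMap R S)) hker
    Ideal.Quotient.mk_surjective
  have : IsLocalization (Algebra.algebraMapSubmonoid S (.powers e))
      (S ⧸ I.map (algebraMap R S)) := by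
    rwa [Algebra.algebraMapSubmonoid, Submonoid.map_powers]
  obtain ⟨w, rfl⟩ := Ideal.Quotient.mk_surjective x
  obtain ⟨_, ⟨n, rfl⟩, hw⟩ :=
    IsLocalization.exists_isIntegral_smul_of_isIntegral_map (.powers e) (x := w) hx
  obtain ⟨r, hr⟩ := IsIntegrallyClosedIn.isIntegral_iff.mp hw
  have he₁ : Ideal.Quotient.mk (I.map (algebraMap R S)) (algebraMap R S e) = 1 := by
    rw [← map_one (Ideal.Quotient.mk _), Ideal.Quotient.eq, ← map_one (algebraMap R S), ← map_sub]
    exact Ideal.mem_map_of_mem _ (sub_mem_comm_iff.mp (hI ▸ Ideal.mem_span_singleton_self _))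
  refine ⟨r, ?_⟩
  rw [IsScalarTower.algebraMap_apply R S, hr, Algebra.smul_def, Ideal.Quotient.algebraMap_eq,
    map_mul, map_pow, map_pow, he₁, one_pow, one_mul]

end Quotient

section Main

variable {A : Type*} [CommRing A] [IsReduced A] {p : Ideal A}

theorem map_quotientMk_nonZeroDivisors (hp : p ∈ minimalPrimes A) {c : A} (hc₁ : 1 - c ∈ p)
    (hc₂ : ∀ q ∈ minimalPrimes A, q ≠ p → c ∈ q) :
    A⁰.map (Ideal.Quotient.mk p) = (A ⧸ p)⁰ := by
  have := hp.isPrime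
  ext v
  constructor
  · rintro ⟨s, hs, rfl⟩
    refine mem_nonZeroDivisors_of_ne_zero fun h ↦ ?_
    exact notMem_nonZeroDivisors_of_mem_mem_minimalPrimes
      (Ideal.Quotient.eq_zero_iff_mem.mp h) hp hs
  · intro hv
    obtain ⟨v, rfl⟩ := Ideal.Quotient.mk_surjective v
    have hvp : v ∉ p := fun h ↦ nonZeroDivisors.ne_zero hv (Ideal.Quotient.eq_zero_iff_mem.mpr h)
    refine ⟨_, mul_add_one_sub_mem_nonZeroDivisors hp hc₁ hc₂ hvp, Ideal.Quotient.eq.mpr ?_⟩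
    convert p.mul_mem_right (1 - v) hc₁ using 1
    ring

variable [IsIntegrallyClosed A] (hfin : (minimalPrimes A).Finite)
include hfin

theorem isCoprime_of_mem_minimalPrimes (hp : p ∈ minimalPrimes A) {q : Ideal A}
    (hq : q ∈ minimalPrimes A) (hne : p ≠ q) : IsCoprime p q := by
  obtain ⟨c, hc₁, hc₂⟩ := exists_one_sub_mem_forall_mem_of_ne hfin hp
  exact Ideal.isCoprime_iff_exists.mpr ⟨1 - c, hc₁, c, hc₂ q hq hne.symm, sub_add_cancel 1 c⟩

theorem isIntegrallyClosed_quotient_of_mem_minimalPrimes (hp : p ∈ minimalPrimes A) :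
    IsIntegrallyClosed (A ⧸ p) := by
  obtain ⟨c, hc₁, hc₂⟩ := exists_one_sub_mem_forall_mem_of_ne hfin hp
  let K := FractionRing A ⧸ p.map (algebraMap A (FractionRing A))
  have : IsFractionRing (A ⧸ p) K :=
    isFractionRing_quotient_map p (map_quotientMk_nonZeroDivisors hp hc₁ hc₂)
  refine (isIntegrallyClosed_iff K).mpr fun {x} hx ↦ ?_
  obtain ⟨r, rfl⟩ := exists_algebraMap_eq_of_isIntegral_quotient
    (isIdempotentElem_of_one_sub_mem hc₁ hc₂) (eq_span_one_sub hc₁ hc₂) (isIntegral_trans x hx)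
  exact ⟨Ideal.Quotient.mk p r, rfl⟩

end Main

/-- **Affine form of: a finitely reducible normal scheme is a finite disjoint union of
normal integral schemes.**
Let `A` be a reduced commutative ring with only finitely many minimal primes, integrally
closed in its total ring of fractions.  Then the canonical ring homomorphism
`A → ∏_{p minimal} A/p` is an isomorphism, and each factor `A/p` is an integrally closed
domain. -/
theorem bijective_pi_quotient_of_integrallyClosed
    (A : Type*) [CommRing A] [IsReduced A] (hfin : (minimalPrimes A).Finite)
    [IsIntegrallyClosed A] :
    Function.Bijective
        (Pi.ringHom fun p : minimalPrimes A => Ideal.Quotient.mk p.1) ∧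
      ∀ p : minimalPrimes A, IsIntegrallyClosed (A ⧸ p.1) := by
  have : Finite (minimalPrimes A) := hfin.to_subtype
  have hcoprime : Pairwise (Function.onFun IsCoprime fun p : minimalPrimes A ↦ p.1) :=
    fun p q hne ↦ isCoprime_of_mem_minimalPrimes hfin p.2 q.2 (Subtype.coe_injective.ne hne)
  refine ⟨⟨?_, fun y ↦ ?_⟩, fun p ↦ isIntegrallyClosed_quotient_of_mem_minimalPrimes hfin p.2⟩
  · refine (injective_iff_map_eq_zero _).mpr fun x hx ↦ ?_
    exact eq_zero_of_forall_mem_minimalPrimes fun p hp ↦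
      Ideal.Quotient.eq_zero_iff_mem.mp (congrFun hx ⟨p, hp⟩)
  · obtain ⟨r, hr⟩ := Ideal.pi_quotient_surjective hcoprime y
    exact ⟨r, funext hr⟩
end
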